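/- arXiv:2201.08198 — 2 statements merged into one kernel-verified Lean document; each statement's English description precedes it below -/
import Mathlib

section
/- Let Fb be a Fell bundle over a discrete groupoid G and π : C_c(Fb) → C a *-homomorphism into a C*-algebra. Then for every morphism f and b ∈ B_f one has ||π(j_f(b))|| ≤ ||b||, and consequently ||π(ξ)|| ≤ Σ_{f} ||ξ(f)|| for every finitely supported section ξ ∈ C_c(Fb). -/
open CategoryTheory

universe v u u'

def Mor (V : Type v) [Groupoid V] := Σ (x : V) (y : V), x ⟶ y

namespace Mor

variable {V : Type v} [Groupoid V]

def src (f : Mor V) : V := f.1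
def tgt (f : Mor V) : V := f.2.1
def hom (f : Mor V) : f.src ⟶ f.tgt := f.2.2

def comp (g f : Mor V) (h : f.tgt = g.src) : Mor V :=
  ⟨f.src, g.tgt, f.hom ≫ eqToHom h ≫ g.hom⟩

def inv (f : Mor V) : Mor V := ⟨f.tgt, f.src, Groupoid.inv f.hom⟩
def id (x : V) : Mor V := ⟨x, x, 𝟙 x⟩

end Mor

/-- A (concretely represented) Fell bundle over a discrete groupoid. -/
structure FellBundle (V : Type v) [Groupoid V] (E : Type u)
    [NonUnitalCStarAlgebra E] where
  fib : Mor V → Submodule ℂ E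
  isClosed : ∀ f, IsClosed (fib f : Set E)
  mul_mem : ∀ (f g : Mor V) (h : g.tgt = f.src) ⦃a b : E⦄,
    a ∈ fib f → b ∈ fib g → a * b ∈ fib (f.comp g h)
  mul_eq_zero : ∀ f g : Mor V, g.tgt ≠ f.src →
    ∀ ⦃a b : E⦄, a ∈ fib f → b ∈ fib g → a * b = 0
  star_mem : ∀ (f : Mor V) ⦃a : E⦄, a ∈ fib f → star a ∈ fib f.inv

variable {V : Type v} [Groupoid V] {E : Type u} [NonUnitalCStarAlgebra E]

/-- The *-algebra `C_c(Fb)` of finitely supported sections of the Fell bundle,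
realized as the *-subalgebra generated by the fibers. -/
def FellBundle.Cc (Fb : FellBundle V E) : NonUnitalStarSubalgebra ℂ E :=
  NonUnitalStarAlgebra.adjoin ℂ (⋃ f : Mor V, (Fb.fib f : Set E))

namespace Mor

lemma inv_comp_self (f : Mor V) : f.inv.comp f rfl = Mor.id f.src := by
  simp [comp, inv, id, hom, src, tgt]
  rfl

lemma id_comp_id (x : V) : (Mor.id x).comp (Mor.id x) rfl = Mor.id x := by
  simp [comp, id, hom, src, tgt]
  rfl

lemma inv_id (x : V) : (Mor.id x).inv = Mor.id x := by
  simp [inv, id, hom, src, tgt]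
  rfl

end Mor

section

variable {C : Type u'} [NonUnitalCStarAlgebra C]

/-- On the C*-algebra `A` the restriction of `π` is contractive, and the C*-identity turns
`‖π (b⋆b)‖ ≤ ‖b⋆b‖` into `‖π b‖² ≤ ‖b‖²`. -/
lemma NonUnitalStarAlgHom.norm_apply_le_of_star_mul_self_mem
    {S A : NonUnitalStarSubalgebra ℂ E} [IsClosed (A : Set E)] (hAS : A ≤ S)
    (π : S →⋆ₙₐ[ℂ] C) (b : S) (hb : star (b : E) * b ∈ A) : ‖π b‖ ≤ ‖(b : E)‖ := by
  let ψ : A →⋆ₙₐ[ℂ] C := π.comp (NonUnitalStarSubalgebra.inclusion hAS)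
  have hψ : ψ ⟨star (b : E) * b, hb⟩ = star (π b) * π b := by
    rw [← map_star, ← map_mul]
    rfl
  have hsq : ‖π b‖ * ‖π b‖ ≤ ‖(b : E)‖ * ‖(b : E)‖ :=
    calc ‖π b‖ * ‖π b‖ = ‖ψ ⟨star (b : E) * b, hb⟩‖ := by rw [hψ, CStarRing.norm_star_mul_self]
      _ ≤ ‖star (b : E) * b‖ := NonUnitalStarAlgHom.norm_apply_le ψ _
      _ = ‖(b : E)‖ * ‖(b : E)‖ := CStarRing.norm_star_mul_self
  exact mul_self_le_mul_self_iff (norm_nonneg _) (norm_nonneg _) |>.mpr hsq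

end

namespace FellBundle

variable (Fb : FellBundle V E)

/-- The unit fiber `B_{1_x}`. -/
def unitFiber (x : V) : NonUnitalStarSubalgebra ℂ E where
  carrier := Fb.fib (Mor.id x)
  add_mem' := (Fb.fib _).add_mem
  zero_mem' := (Fb.fib _).zero_mem
  mul_mem' ha hb := Mor.id_comp_id x ▸ Fb.mul_mem (Mor.id x) (Mor.id x) rfl ha hb
  smul_mem' c _ ha := (Fb.fib _).smul_mem c ha
  star_mem' ha := Mor.inv_id x ▸ Fb.star_mem (Mor.id x) ha

instance isClosed_unitFiber (x : V) : IsClosed (Fb.unitFiber x : Set E) :=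
  Fb.isClosed _

lemma fib_subset_Cc (f : Mor V) : (Fb.fib f : Set E) ⊆ Fb.Cc :=
  fun _ hb => NonUnitalStarAlgebra.subset_adjoin ℂ _ (Set.mem_iUnion.mpr ⟨f, hb⟩)

lemma unitFiber_le_Cc (x : V) : Fb.unitFiber x ≤ Fb.Cc :=
  Fb.fib_subset_Cc (Mor.id x)

lemma star_mul_self_mem_unitFiber {f : Mor V} {b : E} (hb : b ∈ Fb.fib f) :
    star b * b ∈ Fb.unitFiber f.src :=
  show star b * b ∈ Fb.fib (Mor.id f.src) from
    Mor.inv_comp_self f ▸ Fb.mul_mem f.inv f rfl (Fb.star_mem f hb) hb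

end FellBundle

/-- every *-homomorphism `π` from `C_c(Fb)` into a C*-algebra `C`
is contractive on each fiber, `‖π(j_f(b))‖ ≤ ‖b‖`, and consequently
`‖π(ξ)‖ ≤ Σ_f ‖ξ(f)‖` for every finitely supported section `ξ`. -/
theorem statement11 (Fb : FellBundle V E) {C : Type u'} [NonUnitalCStarAlgebra C]
    (π : Fb.Cc →⋆ₙₐ[ℂ] C) :
    (∀ (f : Mor V) (b : E) (hb : b ∈ Fb.fib f),
      ‖π ⟨b, NonUnitalStarAlgebra.subset_adjoin ℂ _ (Set.mem_iUnion.mpr ⟨f, hb⟩)⟩‖ ≤ ‖b‖) ∧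
    ∀ (s : Finset (Mor V)) (ξ : Mor V → E) (hξ : ∀ f, ξ f ∈ Fb.fib f),
      ‖π ⟨∑ f ∈ s, ξ f, sum_mem fun f _ =>
        NonUnitalStarAlgebra.subset_adjoin ℂ _ (Set.mem_iUnion.mpr ⟨f, hξ f⟩)⟩‖ ≤
      ∑ f ∈ s, ‖ξ f‖ := by
  have fiber_contractive (f : Mor V) (b : E) (hb : b ∈ Fb.fib f) :
      ‖π ⟨b, Fb.fib_subset_Cc f hb⟩‖ ≤ ‖b‖ :=
    π.norm_apply_le_of_star_mul_self_mem (Fb.unitFiber_le_Cc f.src) _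
      (Fb.star_mul_self_mem_unitFiber hb)
  refine ⟨fiber_contractive, fun s ξ hξ => ?_⟩
  have hsum : (⟨∑ f ∈ s, ξ f, sum_mem fun f _ => Fb.fib_subset_Cc f (hξ f)⟩ : Fb.Cc) =
      ∑ f ∈ s, ⟨ξ f, Fb.fib_subset_Cc f (hξ f)⟩ := by
    ext
    simp
  calc ‖π ⟨∑ f ∈ s, ξ f, _⟩‖ = ‖∑ f ∈ s, π ⟨ξ f, Fb.fib_subset_Cc f (hξ f)⟩‖ := by
        rw [hsum, map_sum]
    _ ≤ ∑ f ∈ s, ‖π ⟨ξ f, Fb.fib_subset_Cc f (hξ f)⟩‖ := norm_sum_le _ _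
    _ ≤ ∑ f ∈ s, ‖ξ f‖ := Finset.sum_le_sum fun f _ => fiber_contractive f (ξ f) (hξ f)
end

section
/- Let B be a topologically G-graded C*-algebra over a discrete groupoid G, with grading {B_g} and conditional expectation F vanishing on B_g for non-identity g. Then for each morphism g there exists a contractive linear map F_g : B → B_g such that F_g(b) = b_g for every finite sum b = Σ_h b_h with b_h ∈ B_h. -/
/-! For a finite sum `b = ∑ b_h` with `b_h ∈ B_h`, the only term of `b_g* b` lying in a unit fibre
is `b_g* b_g`, so `F (b_g* b) = b_g* b_g`. Since `F` is contractive, the C*-identity gives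
`‖b_g‖² ≤ ‖b_g‖ ‖b‖`, i.e. `‖b_g‖ ≤ ‖b‖`. In particular `b_g` is determined by `b`, and `b ↦ b_g`
is a contraction from the dense span of the fibres into the closed subspace `B_g`; it extends by
continuity to all of `B`. -/

open CategoryTheory
open scoped Classical

universe v u

namespace Mor

variable {V : Type v} [Groupoid V]

/-- `f` is an identity morphism. -/
def IsId (f : Mor V) : Prop := ∃ x : V, f = Mor.id x

end Mor

variable {V : Type v} [Groupoid V] {B : Type u}

/-- The closed span of the unit fibers of a family of subspaces indexed by the
morphisms of a groupoid. -/
def diag [NonUnitalCStarAlgebra B] (Bg : Mor V → Submodule ℂ B) : Set B :=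
  closure (↑(Submodule.span ℂ (⋃ x : V, (Bg (Mor.id x) : Set B))) : Set B)

namespace Mor

lemma inv_comp_self_s15 (g : Mor V) : g.inv.comp g rfl = Mor.id g.src := by
  obtain ⟨gs, gt, gh⟩ := g
  change (⟨gs, gs, gh ≫ 𝟙 gt ≫ Groupoid.inv gh⟩ : Mor V) = ⟨gs, gs, 𝟙 gs⟩
  simp

lemma eq_of_isId_inv_comp {g f : Mor V} {h : f.tgt = g.inv.src} (hid : (g.inv.comp f h).IsId) :
    f = g := by
  obtain ⟨fs, ft, fh⟩ := f
  obtain ⟨gs, gt, gh⟩ := g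
  obtain ⟨x, hx⟩ := hid
  dsimp only [tgt, src, inv] at h
  subst h
  dsimp only [comp, inv, id, hom, src, tgt] at hx
  obtain ⟨rfl, hx⟩ := Sigma.mk.inj_iff.mp hx
  obtain ⟨rfl, hx⟩ := Sigma.mk.inj_iff.mp (eq_of_heq hx)
  have hcomp : fh ≫ Groupoid.inv gh = 𝟙 _ := by simpa using eq_of_heq hx
  rw [show fh = gh by simpa using congrArg (· ≫ gh) hcomp]

end Mor

lemma norm_le_of_norm_star_mul_self_le {A : Type*} [NonUnitalNormedRing A] [StarRing A]
    [CStarRing A] {a b : A} (h : ‖star a * a‖ ≤ ‖star a * b‖) : ‖a‖ ≤ ‖b‖ := by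
  rcases eq_or_ne a 0 with rfl | ha
  · simp
  refine le_of_mul_le_mul_left ?_ (norm_pos_iff.mpr ha)
  calc ‖a‖ * ‖a‖ = ‖star a * a‖ := CStarRing.norm_star_mul_self.symm
    _ ≤ ‖star a * b‖ := h
    _ ≤ ‖a‖ * ‖b‖ := by simpa only [norm_star] using norm_mul_le (star a) b

lemma DirectSum.component_sum_lof {R ι : Type*} [Semiring R] [DecidableEq ι] {M : ι → Type*}
    [∀ i, AddCommMonoid (M i)] [∀ i, Module R (M i)] (s : Finset ι) (v : ∀ i, M i) (g : ι) :
    component R ι M g (∑ i ∈ s, lof R ι M i (v i)) = if g ∈ s then v g else 0 := by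
  rw [map_sum]
  split_ifs with hg
  · rw [Finset.sum_eq_single_of_mem g hg fun i _ hi => by rw [component.of, dif_neg hi]]
    exact component.lof_self R g (v g)
  · exact Finset.sum_eq_zero fun i hi => by
      rw [component.of, dif_neg (ne_of_mem_of_not_mem hi hg)]

lemma LinearMap.extendOfNorm_mem {𝕜 𝕜₂ E Eₗ F : Type*} [NormedDivisionRing 𝕜]
    [NormedDivisionRing 𝕜₂] {σ₁₂ : 𝕜 →+* 𝕜₂} [AddCommGroup E] [SeminormedAddCommGroup Eₗ]
    [NormedAddCommGroup F] [Module 𝕜 E] [Module 𝕜₂ F] [IsBoundedSMul 𝕜₂ F] [Module 𝕜 Eₗ]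
    [IsBoundedSMul 𝕜 Eₗ] [CompleteSpace F] {f : E →ₛₗ[σ₁₂] F} {e : E →ₗ[𝕜] Eₗ}
    (h_dense : DenseRange e) (h_norm : ∃ C, ∀ x, ‖f x‖ ≤ C * ‖e x‖) {K : Set F}
    (hK : IsClosed K) (hf : ∀ x, f x ∈ K) (y : Eₗ) : f.extendOfNorm e y ∈ K :=
  h_dense.induction_on y (hK.preimage (f.extendOfNorm e).continuous) fun x => by
    rw [extendOfNorm_eq h_dense h_norm]; exact hf x

section Graded

variable [NonUnitalCStarAlgebra B] {Bg : Mor V → Submodule ℂ B} {F : B →L[ℂ] B}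

lemma mem_diag_of_isId {f : Mor V} (hf : f.IsId) {a : B} (ha : a ∈ Bg f) : a ∈ diag Bg := by
  obtain ⟨x, rfl⟩ := hf
  exact subset_closure (Submodule.subset_span (Set.mem_iUnion.2 ⟨x, ha⟩))

lemma apply_star_mul_sum_eq
    (hmul : ∀ (f g : Mor V) (h : g.tgt = f.src) ⦃a b : B⦄,
      a ∈ Bg f → b ∈ Bg g → a * b ∈ Bg (f.comp g h))
    (hzero : ∀ f g : Mor V, g.tgt ≠ f.src →
      ∀ ⦃a b : B⦄, a ∈ Bg f → b ∈ Bg g → a * b = 0)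
    (hstar : ∀ (f : Mor V) ⦃a : B⦄, a ∈ Bg f → star a ∈ Bg f.inv)
    (hFid : ∀ b ∈ diag Bg, F b = b)
    (hF0 : ∀ f : Mor V, ¬ f.IsId → ∀ b ∈ Bg f, F b = 0)
    {s : Finset (Mor V)} {b : Mor V → B} (hb : ∀ f, b f ∈ Bg f) {g : Mor V} (hg : g ∈ s) :
    F (star (b g) * ∑ f ∈ s, b f) = star (b g) * b g := by
  have hbg := hstar g (hb g)
  rw [Finset.mul_sum, map_sum, Finset.sum_eq_single_of_mem g hg]
  · exact hFid _ (mem_diag_of_isId ⟨g.src, g.inv_comp_self_s15⟩ (hmul _ _ rfl hbg (hb g)))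
  · intro f _ hfg
    by_cases ht : f.tgt = g.inv.src
    · exact hF0 _ (fun hid => hfg (Mor.eq_of_isId_inv_comp hid)) _ (hmul _ _ ht hbg (hb f))
    · rw [hzero _ _ ht hbg (hb f), map_zero]

lemma norm_component_le_norm_sum
    (hmul : ∀ (f g : Mor V) (h : g.tgt = f.src) ⦃a b : B⦄,
      a ∈ Bg f → b ∈ Bg g → a * b ∈ Bg (f.comp g h))
    (hzero : ∀ f g : Mor V, g.tgt ≠ f.src →
      ∀ ⦃a b : B⦄, a ∈ Bg f → b ∈ Bg g → a * b = 0)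
    (hstar : ∀ (f : Mor V) ⦃a : B⦄, a ∈ Bg f → star a ∈ Bg f.inv)
    (hFnorm : ‖F‖ ≤ 1)
    (hFid : ∀ b ∈ diag Bg, F b = b)
    (hF0 : ∀ f : Mor V, ¬ f.IsId → ∀ b ∈ Bg f, F b = 0)
    {s : Finset (Mor V)} {b : Mor V → B} (hb : ∀ f, b f ∈ Bg f) {g : Mor V} (hg : g ∈ s) :
    ‖b g‖ ≤ ‖∑ f ∈ s, b f‖ :=
  norm_le_of_norm_star_mul_self_le <| calc
    ‖star (b g) * b g‖ = ‖F (star (b g) * ∑ f ∈ s, b f)‖ := by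
      rw [apply_star_mul_sum_eq hmul hzero hstar hFid hF0 hb hg]
    _ ≤ ‖star (b g) * ∑ f ∈ s, b f‖ := (F.le_of_opNorm_le hFnorm _).trans_eq (one_mul _)

end Graded

open scoped DirectSum

theorem statement15_general [NonUnitalCStarAlgebra B]
    (Bg : Mor V → Submodule ℂ B)
    (hclosed : ∀ f, IsClosed (Bg f : Set B))
    (hmul : ∀ (f g : Mor V) (h : g.tgt = f.src) ⦃a b : B⦄,
      a ∈ Bg f → b ∈ Bg g → a * b ∈ Bg (f.comp g h))
    (hzero : ∀ f g : Mor V, g.tgt ≠ f.src →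
      ∀ ⦃a b : B⦄, a ∈ Bg f → b ∈ Bg g → a * b = 0)
    (hstar : ∀ (f : Mor V) ⦃a : B⦄, a ∈ Bg f → star a ∈ Bg f.inv)
    (hdense : Dense (↑(Submodule.span ℂ (⋃ f : Mor V, (Bg f : Set B))) : Set B))
    (F : B →L[ℂ] B)
    (hFnorm : ‖F‖ ≤ 1)
    (hFid : ∀ b ∈ diag Bg, F b = b)
    (hF0 : ∀ f : Mor V, ¬ f.IsId → ∀ b ∈ Bg f, F b = 0) :
    ∀ g : Mor V, ∃ Fg : B →L[ℂ] B,
      ‖Fg‖ ≤ 1 ∧ (∀ b : B, Fg b ∈ Bg g) ∧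
      ∀ (s : Finset (Mor V)) (b : Mor V → B), (∀ f, b f ∈ Bg f) →
        Fg (∑ f ∈ s, b f) = if g ∈ s then b g else 0 := by
  intro g
  let Φ := DirectSum.coeLinearMap Bg
  let π : (⨁ f, Bg f) →ₗ[ℂ] B := (Bg g).subtype ∘ₗ DirectSum.component ℂ _ _ g
  have hΦ : DenseRange Φ := by
    rwa [DenseRange, ← LinearMap.coe_range, DirectSum.range_coeLinearMap, Submodule.iSup_eq_span]
  have hπ : ∀ x, ‖π x‖ ≤ 1 * ‖Φ x‖ := by
    intro x
    rw [one_mul, DirectSum.coeLinearMap_eq_dfinsuppSum, DFinsupp.sum]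
    by_cases hg : g ∈ x.support
    · exact norm_component_le_norm_sum hmul hzero hstar hFnorm hFid hF0 (fun f => (x f).2) hg
    · simp [π, ← DirectSum.apply_eq_component, DFinsupp.notMem_support_iff.mp hg]
  refine ⟨π.extendOfNorm Φ, LinearMap.opNorm_extendOfNorm_le hΦ zero_le_one hπ,
    LinearMap.extendOfNorm_mem hΦ ⟨1, hπ⟩ (hclosed g) fun x => (x g).2, fun s b hb => ?_⟩
  have hsum : ∑ f ∈ s, b f = Φ (∑ f ∈ s, DirectSum.lof ℂ _ (fun f => Bg f) f ⟨b f, hb f⟩) := by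
    simp [Φ]
  rw [hsum, LinearMap.extendOfNorm_eq hΦ ⟨1, hπ⟩]
  simp only [π, LinearMap.comp_apply, DirectSum.component_sum_lof]
  split_ifs <;> rfl

/-- let `B` be a topologically `G`-graded C*-algebra over a
discrete groupoid `G`, with grading `{B_g}` and conditional expectation `F`
onto the closed span of the unit fibers vanishing on `B_g` for non-identity
`g`.  Then for each morphism `g` there is a contractive linear map
`F_g : B → B_g` with `F_g(b) = b_g` for every finite sum `b = Σ_h b_h`
(`b_h ∈ B_h`). -/
theorem statement15 [NonUnitalCStarAlgebra B] [PartialOrder B] [StarOrderedRing B]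
    (Bg : Mor V → Submodule ℂ B)
    (hclosed : ∀ f, IsClosed (Bg f : Set B))
    (hmul : ∀ (f g : Mor V) (h : g.tgt = f.src) ⦃a b : B⦄,
      a ∈ Bg f → b ∈ Bg g → a * b ∈ Bg (f.comp g h))
    (hzero : ∀ f g : Mor V, g.tgt ≠ f.src →
      ∀ ⦃a b : B⦄, a ∈ Bg f → b ∈ Bg g → a * b = 0)
    (hstar : ∀ (f : Mor V) ⦃a : B⦄, a ∈ Bg f → star a ∈ Bg f.inv)
    (hdense : Dense (↑(Submodule.span ℂ (⋃ f : Mor V, (Bg f : Set B))) : Set B))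
    (hind : ∀ (s : Finset (Mor V)) (b : Mor V → B), (∀ f, b f ∈ Bg f) →
      (∑ f ∈ s, b f) = 0 → ∀ f ∈ s, b f = 0)
    (F : B →L[ℂ] B)
    (hFnorm : ‖F‖ ≤ 1)
    (hFpos : ∀ b : B, 0 ≤ b → 0 ≤ F b)
    (hFrange : ∀ b : B, F b ∈ diag Bg)
    (hFid : ∀ b ∈ diag Bg, F b = b)
    (hF0 : ∀ f : Mor V, ¬ f.IsId → ∀ b ∈ Bg f, F b = 0) :
    ∀ g : Mor V, ∃ Fg : B →L[ℂ] B,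
      ‖Fg‖ ≤ 1 ∧ (∀ b : B, Fg b ∈ Bg g) ∧
      ∀ (s : Finset (Mor V)) (b : Mor V → B), (∀ f, b f ∈ Bg f) →
        Fg (∑ f ∈ s, b f) = if g ∈ s then b g else 0 :=
  statement15_general Bg hclosed hmul hzero hstar hdense F hFnorm hFid hF0
end
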